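/- Let x̂ minimize ‖Ax−b‖₂ over {x ∈ [0,1]^n : ‖x‖₁ ≤ σ} with at most m fractional entries, and let x⋆ be an optimal solution of min ‖Ax−b‖₂ over {x ∈ [0,1]^n : ‖x‖₀ ≤ σ}. Then ‖Ax⋆ − Ax̂‖₂ ≤ 2‖x̂ − ⌊x̂⌋‖₁ · max_i ‖A_i‖₂ ≤ 2 m^{3/2} ‖A‖_∞. -/

import Mathlib

/-!
Round `x̂` down, and then up on `⌊‖x̂ - ⌊x̂⌋‖₁⌋` of its fractional coordinates. The result `z` is a
`0/1` point with at most `σ` ones, hence feasible for the `ℓ₀`-problem, and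
`‖z - x̂‖₁ ≤ 2 ‖x̂ - ⌊x̂⌋‖₁`. The direction `z - x̂` only moves fractional coordinates and, when the
`ℓ₁`-constraint is tight (so that `‖x̂ - ⌊x̂⌋‖₁` is an integer), keeps the coordinate sum; hence `x̂`
can move along `±(z - x̂)` inside the relaxation, and first-order optimality of `x̂` makes the
residual `r = A x̂ - b` orthogonal to `A (z - x̂)`. As `x⋆` is feasible for the relaxation,
`⟪r, A (x⋆ - x̂)⟫ ≥ 0` as well. Optimality of `x⋆` against `z` now gives
`‖r‖² + ‖A (x⋆ - x̂)‖² ≤ ‖r + A (x⋆ - x̂)‖² ≤ ‖r + A (z - x̂)‖² = ‖r‖² + ‖A (z - x̂)‖²`,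
and `‖A (z - x̂)‖₂ ≤ ‖z - x̂‖₁ maxᵢ ‖Aᵢ‖₂`. For the second inequality, `x̂` has at most `m`
fractional entries and `‖Aᵢ‖₂ ≤ √m ‖A‖_∞`.
-/

open scoped BigOperators Classical

noncomputable def l2 {m : ℕ} (v : Fin m → ℝ) : ℝ := Real.sqrt (∑ i, (v i) ^ 2)

def l1 {n : ℕ} (v : Fin n → ℝ) : ℝ := ∑ i, |v i|

noncomputable def l0 {n : ℕ} (v : Fin n → ℝ) : ℕ :=
  (Finset.univ.filter (fun i => v i ≠ 0)).card

noncomputable def matInf {m n : ℕ} (A : Matrix (Fin m) (Fin n) ℤ) : ℝ :=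
  ⨆ i, ⨆ j, |(A i j : ℝ)|

open Filter Topology Set
open scoped RealInnerProductSpace Matrix

section InnerProduct

variable {E : Type*} [NormedAddCommGroup E] [InnerProductSpace ℝ E]

theorem inner_nonneg_of_eventually_norm_le_norm_add_smul {r w : E}
    (h : ∀ᶠ t in 𝓝[>] (0 : ℝ), ‖r‖ ≤ ‖r + t • w‖) : 0 ≤ ⟪r, w⟫ := by
  have hpos : ∀ᶠ t in 𝓝[>] (0 : ℝ), 0 ≤ 2 * ⟪r, w⟫ + t * ‖w‖ ^ 2 := by
    filter_upwards [h, self_mem_nhdsWithin] with t ht (htpos : 0 < t)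
    have hsq := pow_le_pow_left₀ (norm_nonneg r) ht 2
    rw [norm_add_sq_real, real_inner_smul_right, norm_smul, mul_pow, Real.norm_eq_abs,
      sq_abs] at hsq
    nlinarith
  have hlim : Tendsto (fun t : ℝ => 2 * ⟪r, w⟫ + t * ‖w‖ ^ 2) (𝓝[>] 0) (𝓝 (2 * ⟪r, w⟫)) :=
    ((by fun_prop : Continuous fun t : ℝ => 2 * ⟪r, w⟫ + t * ‖w‖ ^ 2).tendsto' 0 _
      (by simp)).mono_left nhdsWithin_le_nhds
  linarith [ge_of_tendsto hlim hpos]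

theorem norm_le_of_norm_add_le_norm_add {r d w : E} (hd : 0 ≤ ⟪r, d⟫) (hw : ⟪r, w⟫ = 0)
    (h : ‖r + d‖ ≤ ‖r + w‖) : ‖d‖ ≤ ‖w‖ := by
  have hsq := pow_le_pow_left₀ (norm_nonneg _) h 2
  rw [norm_add_sq_real, norm_add_sq_real, hw] at hsq
  exact le_of_pow_le_pow_left₀ two_ne_zero (norm_nonneg _) (by linarith)

end InnerProduct

theorem Convex.eventually_add_smul_sub_mem {E : Type*} [AddCommGroup E] [Module ℝ E]
    {S : Set E} (hS : Convex ℝ S) {x y : E} (hx : x ∈ S) (hy : y ∈ S) :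
    ∀ᶠ t in 𝓝[>] (0 : ℝ), x + t • (y - x) ∈ S := by
  filter_upwards [Ioc_mem_nhdsGT one_pos] with t ht
  exact hS.add_smul_sub_mem hx hy (Ioc_subset_Icc_self ht)

section Norms

variable {m n : ℕ}

theorem l2_eq_norm_toLp (v : Fin m → ℝ) :
    l2 v = ‖(WithLp.toLp 2 v : EuclideanSpace ℝ (Fin m))‖ := by
  simp [l2, EuclideanSpace.norm_eq, sq_abs]

theorem l1_eq_sum_of_nonneg {x : Fin n → ℝ} (hx : ∀ i, 0 ≤ x i) : l1 x = ∑ i, x i :=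
  Finset.sum_congr rfl fun i _ => abs_of_nonneg (hx i)

theorem l1_nonneg (x : Fin n → ℝ) : 0 ≤ l1 x :=
  Finset.sum_nonneg fun i _ => abs_nonneg (x i)

theorem convexOn_l1 : ConvexOn ℝ univ (l1 : (Fin n → ℝ) → ℝ) := by
  have h : (l1 : (Fin n → ℝ) → ℝ) = fun x => ‖(WithLp.toLp 1 x : PiLp 1 fun _ : Fin n => ℝ)‖ := by
    funext x
    simp [l1, PiLp.norm_eq_of_L1]
  rw [h]
  exact (convexOn_norm convex_univ).comp_linearMap (WithLp.linearEquiv 1 ℝ (Fin n → ℝ)).symm.toLinearMap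

theorem l1_le_l0 {x : Fin n → ℝ} (hx : ∀ i, |x i| ≤ 1) : l1 x ≤ l0 x := by
  rw [l1, l0, ← Finset.sum_filter_of_ne fun i _ h => abs_ne_zero.1 h, Finset.card_eq_sum_ones]
  push_cast
  exact Finset.sum_le_sum fun i _ => hx i

theorem l0_eq_sum_of_eq_zero_or_eq_one {x : Fin n → ℝ} (hx : ∀ i, x i = 0 ∨ x i = 1) :
    (l0 x : ℝ) = ∑ i, x i := by
  rw [l0, ← Finset.sum_filter_ne_zero, Finset.card_eq_sum_ones]
  push_cast
  refine Finset.sum_congr rfl fun i hi => ?_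
  exact ((hx i).resolve_left (Finset.mem_filter.1 hi).2).symm

theorem l2_mulVec_le (M : Matrix (Fin m) (Fin n) ℝ) (v : Fin n → ℝ) :
    l2 (M *ᵥ v) ≤ l1 v * ⨆ j, l2 (fun r => M r j) := by
  have hcol : ∀ j, l2 (fun r => M r j) ≤ ⨆ j, l2 (fun r => M r j) := fun j =>
    le_ciSup (f := fun j => l2 (fun r => M r j)) (Set.finite_range _).bddAbove j
  have hsum : (WithLp.toLp 2 (M *ᵥ v) : EuclideanSpace ℝ (Fin m)) =
      ∑ j, v j • WithLp.toLp 2 (fun r => M r j) := by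
    ext r
    simp [Matrix.mulVec, dotProduct, mul_comm]
  rw [l2_eq_norm_toLp, hsum, l1, Finset.sum_mul]
  refine (norm_sum_le _ _).trans (Finset.sum_le_sum fun j _ => ?_)
  rw [norm_smul, Real.norm_eq_abs, ← l2_eq_norm_toLp]
  exact mul_le_mul_of_nonneg_left (hcol j) (abs_nonneg _)

theorem abs_le_matInf (A : Matrix (Fin m) (Fin n) ℤ) (i : Fin m) (j : Fin n) :
    |(A i j : ℝ)| ≤ matInf A :=
  (le_ciSup (Set.finite_range _).bddAbove j).trans
    (le_ciSup (f := fun i => ⨆ j, |(A i j : ℝ)|) (Set.finite_range _).bddAbove i)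

theorem matInf_nonneg (A : Matrix (Fin m) (Fin n) ℤ) : 0 ≤ matInf A :=
  Real.iSup_nonneg fun _ => Real.iSup_nonneg fun _ => abs_nonneg _

theorem iSup_l2_col_le_sqrt_mul_matInf (A : Matrix (Fin m) (Fin n) ℤ) :
    ⨆ j, l2 (fun r => (A r j : ℝ)) ≤ √m * matInf A := by
  refine Real.iSup_le (fun j => ?_) (by have := matInf_nonneg A; positivity)
  calc l2 (fun r => (A r j : ℝ)) ≤ √(∑ _r : Fin m, matInf A ^ 2) := by
        refine Real.sqrt_le_sqrt (Finset.sum_le_sum fun r _ => ?_)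
        rw [← sq_abs]
        exact pow_le_pow_left₀ (abs_nonneg _) (abs_le_matInf A r j) 2
    _ = √m * matInf A := by
        simp [Real.sqrt_mul (Nat.cast_nonneg m), Real.sqrt_sq (matInf_nonneg A)]

end Norms

section LeastSquares

variable {m n : ℕ}

def boxL1Ball (n : ℕ) (s : ℝ) : Set (Fin n → ℝ) :=
  {x | (∀ i, 0 ≤ x i ∧ x i ≤ 1) ∧ l1 x ≤ s}

def boxL0Ball (n σ : ℕ) : Set (Fin n → ℝ) :=
  {x | (∀ i, 0 ≤ x i ∧ x i ≤ 1) ∧ l0 x ≤ σ}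

theorem convex_boxL1Ball (s : ℝ) : Convex ℝ (boxL1Ball n s) := by
  have h : boxL1Ball n s = (univ.pi fun _ => Icc 0 1) ∩ {x ∈ univ | l1 x ≤ s} := by
    ext x
    simp only [boxL1Ball, mem_inter_iff, Set.mem_pi, mem_univ, forall_const, mem_Icc, true_and,
      mem_ofPred_eq]
  rw [h]
  exact (convex_pi fun _ _ => convex_Icc 0 1).inter (convexOn_l1.convex_le s)

theorem boxL0Ball_subset_boxL1Ball (σ : ℕ) : boxL0Ball n σ ⊆ boxL1Ball n σ := fun x hx =>
  ⟨hx.1, (l1_le_l0 fun i => abs_le.2 ⟨by linarith [(hx.1 i).1], (hx.1 i).2⟩).trans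
    (by exact_mod_cast hx.2)⟩

theorem eventually_add_smul_mem_boxL1Ball {s : ℝ} {x v : Fin n → ℝ} (hx : x ∈ boxL1Ball n s)
    (hcoord : ∀ i, v i = 0 ∨ x i ∈ Ioo 0 1) (hsum : ∑ i, v i = 0 ∨ l1 x < s) :
    ∀ᶠ t in 𝓝[>] (0 : ℝ), x + t • v ∈ boxL1Ball n s := by
  have hbox : ∀ᶠ t in 𝓝 (0 : ℝ), ∀ i, 0 ≤ x i + t * v i ∧ x i + t * v i ≤ 1 := by
    refine eventually_all.2 fun i => ?_
    rcases hcoord i with h | h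
    · exact Eventually.of_forall fun t => by simpa [h] using hx.1 i
    · have hlim := (by fun_prop : Continuous fun t : ℝ => x i + t * v i).tendsto' 0 (x i)
        (by simp)
      filter_upwards [hlim (Ioo_mem_nhds h.1 h.2)] with t ht using ⟨ht.1.le, ht.2.le⟩
  have hl1 : ∀ᶠ t in 𝓝 (0 : ℝ), l1 x + t * ∑ i, v i ≤ s := by
    rcases hsum with h | h
    · exact Eventually.of_forall fun t => by simpa [h] using hx.2
    · have hlim := (by fun_prop : Continuous fun t : ℝ => l1 x + t * ∑ i, v i).tendsto' 0 (l1 x)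
        (by simp)
      filter_upwards [hlim (Iio_mem_nhds h)] with t ht using ht.le
  filter_upwards [nhdsWithin_le_nhds (hbox.and hl1)] with t ⟨htbox, htl1⟩
  refine ⟨htbox, ?_⟩
  rw [l1_eq_sum_of_nonneg (x := x + t • v) fun i => (htbox i).1]
  simpa [Finset.sum_add_distrib, Finset.mul_sum, l1_eq_sum_of_nonneg fun i => (hx.1 i).1]
    using htl1

variable (M : Matrix (Fin m) (Fin n) ℝ) (c : Fin m → ℝ)

theorem inner_residual_nonneg_of_isMinOn {S : Set (Fin n → ℝ)} {x v : Fin n → ℝ}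
    (hx : IsMinOn (fun y => l2 (M *ᵥ y - c)) S x)
    (hv : ∀ᶠ t in 𝓝[>] (0 : ℝ), x + t • v ∈ S) :
    0 ≤ ⟪(WithLp.toLp 2 (M *ᵥ x - c) : EuclideanSpace ℝ (Fin m)), WithLp.toLp 2 (M *ᵥ v)⟫ := by
  refine inner_nonneg_of_eventually_norm_le_norm_add_smul ?_
  filter_upwards [hv] with t ht
  have h := isMinOn_iff.1 hx _ ht
  rwa [Matrix.mulVec_add, Matrix.mulVec_smul, add_sub_right_comm, l2_eq_norm_toLp,
    l2_eq_norm_toLp, WithLp.toLp_add, WithLp.toLp_smul] at h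

theorem l2_mulVec_sub_le_of_isMinOn {S T : Set (Fin n → ℝ)} {x y v : Fin n → ℝ}
    (hx : IsMinOn (fun w => l2 (M *ᵥ w - c)) S x) (hy : IsMinOn (fun w => l2 (M *ᵥ w - c)) T y)
    (hxy : ∀ᶠ t in 𝓝[>] (0 : ℝ), x + t • (y - x) ∈ S) (hvT : x + v ∈ T)
    (hv : ∀ᶠ t in 𝓝[>] (0 : ℝ), x + t • v ∈ S ∧ x + t • -v ∈ S) :
    l2 (M *ᵥ y - M *ᵥ x) ≤ l2 (M *ᵥ v) := by
  set R : EuclideanSpace ℝ (Fin m) := WithLp.toLp 2 (M *ᵥ x - c)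
  set D : EuclideanSpace ℝ (Fin m) := WithLp.toLp 2 (M *ᵥ y - M *ᵥ x)
  set W : EuclideanSpace ℝ (Fin m) := WithLp.toLp 2 (M *ᵥ v)
  have hRD : 0 ≤ ⟪R, D⟫ := by
    have h := inner_residual_nonneg_of_isMinOn M c hx hxy
    rwa [Matrix.mulVec_sub] at h
  have hRW : ⟪R, W⟫ = 0 := by
    have hpos := inner_residual_nonneg_of_isMinOn M c hx (hv.mono fun _ h => h.1)
    have hneg := inner_residual_nonneg_of_isMinOn M c hx (hv.mono fun _ h => h.2)
    rw [Matrix.mulVec_neg, WithLp.toLp_neg, inner_neg_right] at hneg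
    exact le_antisymm (neg_nonneg.1 hneg) hpos
  have hopt : ‖R + D‖ ≤ ‖R + W‖ := by
    have hRD : R + D = WithLp.toLp 2 (M *ᵥ y - c) := by
      rw [← WithLp.toLp_add, sub_add_sub_cancel']
    have hRW : R + W = WithLp.toLp 2 (M *ᵥ (x + v) - c) := by
      rw [← WithLp.toLp_add, Matrix.mulVec_add, add_sub_right_comm]
    rw [hRD, hRW, ← l2_eq_norm_toLp, ← l2_eq_norm_toLp]
    exact isMinOn_iff.1 hy _ hvT
  rw [l2_eq_norm_toLp, l2_eq_norm_toLp]
  exact norm_le_of_norm_add_le_norm_add hRD hRW hopt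

end LeastSquares

section Rounding

variable {n : ℕ}

theorem mem_Ioo_of_mem_Icc_of_not_isInt {a : ℝ} (ha : a ∈ Icc 0 1) (h : ¬ ∃ z : ℤ, a = z) :
    a ∈ Ioo 0 1 :=
  ⟨ha.1.lt_of_ne fun h0 => h ⟨0, by simp [← h0]⟩, ha.2.lt_of_ne fun h1 => h ⟨1, by simp [h1]⟩⟩

theorem eq_zero_or_eq_one_of_mem_Icc_of_isInt {a : ℝ} (ha : a ∈ Icc 0 1) (h : ∃ z : ℤ, a = z) :
    a = 0 ∨ a = 1 := by
  obtain ⟨z, rfl⟩ := h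
  obtain ⟨h0, h1⟩ := ha
  have h0 : 0 ≤ z := by exact_mod_cast h0
  have h1 : z ≤ 1 := by exact_mod_cast h1
  interval_cases z <;> simp

noncomputable def nonIntegralCoords (x : Fin n → ℝ) : Finset (Fin n) :=
  Finset.univ.filter fun i => ¬ ∃ z : ℤ, x i = z

theorem l1_fract_le_card_nonIntegralCoords (x : Fin n → ℝ) :
    l1 (fun i => Int.fract (x i)) ≤ (nonIntegralCoords x).card := by
  have hsupp : ∀ i ∉ nonIntegralCoords x, Int.fract (x i) = 0 := fun i hi =>
    Int.fract_eq_zero_iff.2 <| by simpa [nonIntegralCoords, eq_comm] using hi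
  calc l1 (fun i => Int.fract (x i)) = ∑ i ∈ nonIntegralCoords x, Int.fract (x i) := by
        rw [l1_eq_sum_of_nonneg fun i => Int.fract_nonneg _]
        exact (Finset.sum_subset (Finset.subset_univ _) fun i _ hi => hsupp i hi).symm
    _ ≤ ∑ _i ∈ nonIntegralCoords x, (1 : ℝ) :=
        Finset.sum_le_sum fun i _ => (Int.fract_lt_one _).le
    _ = (nonIntegralCoords x).card := by simp

theorem natCast_floor_l1_fract_of_sum_eq {x : Fin n → ℝ} {k : ℤ} (h : ∑ i, x i = k) :
    (⌊l1 (fun i => Int.fract (x i))⌋₊ : ℝ) = l1 (fun i => Int.fract (x i)) := by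
  have hint : l1 (fun i => Int.fract (x i)) = ((k - ∑ i, ⌊x i⌋ : ℤ) : ℝ) := by
    rw [l1_eq_sum_of_nonneg fun i => Int.fract_nonneg _]
    push_cast
    simp only [Int.fract, Finset.sum_sub_distrib, h]
  obtain ⟨N, hN⟩ := Int.eq_ofNat_of_zero_le (by exact_mod_cast hint ▸ l1_nonneg _)
  rw [hint, hN]
  simp

noncomputable def roundingDirection (x : Fin n → ℝ) (J : Finset (Fin n)) : Fin n → ℝ :=
  fun i => (if i ∈ J then 1 else 0) - Int.fract (x i)

variable {x : Fin n → ℝ} {J : Finset (Fin n)}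

theorem sum_roundingDirection (x : Fin n → ℝ) (J : Finset (Fin n)) :
    ∑ i, roundingDirection x J i = J.card - l1 (fun i => Int.fract (x i)) := by
  simp [roundingDirection, Finset.sum_sub_distrib, l1_eq_sum_of_nonneg, Int.fract_nonneg]

theorem l1_roundingDirection_le (x : Fin n → ℝ) (J : Finset (Fin n)) :
    l1 (roundingDirection x J) ≤ J.card + l1 (fun i => Int.fract (x i)) := by
  calc l1 (roundingDirection x J)
      ≤ ∑ i, ((if i ∈ J then 1 else 0) + |Int.fract (x i)|) :=
        Finset.sum_le_sum fun i _ => (abs_sub _ _).trans (by split_ifs <;> simp)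
    _ = J.card + l1 (fun i => Int.fract (x i)) := by simp [Finset.sum_add_distrib, l1]

theorem roundingDirection_eq_zero_or_mem_Ioo (hx : ∀ i, 0 ≤ x i ∧ x i ≤ 1)
    (hJ : J ⊆ nonIntegralCoords x) (i : Fin n) :
    roundingDirection x J i = 0 ∨ x i ∈ Ioo 0 1 := by
  by_cases h : ∃ z : ℤ, x i = z
  · have hi : i ∉ J := fun hi => (Finset.mem_filter.1 (hJ hi)).2 h
    obtain ⟨z, hz⟩ := h
    simp [roundingDirection, hi, hz]
  · exact Or.inr (mem_Ioo_of_mem_Icc_of_not_isInt (hx i) h)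

theorem add_roundingDirection_eq_zero_or_eq_one (hx : ∀ i, 0 ≤ x i ∧ x i ≤ 1)
    (hJ : J ⊆ nonIntegralCoords x) (i : Fin n) :
    (x + roundingDirection x J) i = 0 ∨ (x + roundingDirection x J) i = 1 := by
  by_cases h : ∃ z : ℤ, x i = z
  · have hi : i ∉ J := fun hi => (Finset.mem_filter.1 (hJ hi)).2 h
    have hfract : Int.fract (x i) = 0 := by
      obtain ⟨z, hz⟩ := h
      simp [hz]
    simpa [roundingDirection, hi, hfract] using eq_zero_or_eq_one_of_mem_Icc_of_isInt (hx i) h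
  · have hxi := mem_Ioo_of_mem_Icc_of_not_isInt (hx i) h
    have hfract : Int.fract (x i) = x i := Int.fract_eq_self.2 ⟨hxi.1.le, hxi.2⟩
    by_cases hi : i ∈ J <;> simp [roundingDirection, hi, hfract]

theorem exists_rounding {σ : ℕ} (hx : x ∈ boxL1Ball n σ) :
    ∃ v : Fin n → ℝ, x + v ∈ boxL0Ball n σ ∧ l1 v ≤ 2 * l1 (fun i => Int.fract (x i)) ∧
      (∀ i, v i = 0 ∨ x i ∈ Ioo 0 1) ∧ (∑ i, v i = 0 ∨ l1 x < σ) := by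
  set f := l1 fun i => Int.fract (x i)
  obtain ⟨J, hJ, hJcard⟩ := Finset.exists_subset_card_eq
    (Nat.floor_le_of_le (l1_fract_le_card_nonIntegralCoords x) : ⌊f⌋₊ ≤ _)
  have hJf : (J.card : ℝ) ≤ f := hJcard ▸ Nat.floor_le (l1_nonneg _)
  have h01 := add_roundingDirection_eq_zero_or_eq_one hx.1 hJ
  refine ⟨roundingDirection x J, ⟨fun i => ?_, ?_⟩, ?_,
    roundingDirection_eq_zero_or_mem_Ioo hx.1 hJ, ?_⟩
  · rcases h01 i with h | h <;> rw [h] <;> norm_num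
  · have hsum : ∑ i, (x + roundingDirection x J) i = l1 x + J.card - f := by
      simp only [Pi.add_apply, Finset.sum_add_distrib, sum_roundingDirection,
        l1_eq_sum_of_nonneg fun i => (hx.1 i).1]
      ring
    have : (l0 (x + roundingDirection x J) : ℝ) ≤ σ := by
      rw [l0_eq_sum_of_eq_zero_or_eq_one h01, hsum]
      linarith [hx.2]
    exact_mod_cast this
  · linarith [l1_roundingDirection_le x J]
  · rcases hx.2.lt_or_eq with h | h
    · exact Or.inr h
    · left
      rw [sum_roundingDirection, hJcard, natCast_floor_l1_fract_of_sum_eq (k := σ), sub_self]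
      rw [← l1_eq_sum_of_nonneg fun i => (hx.1 i).1, h, Int.cast_natCast]

end Rounding

theorem rpow_three_halves {x : ℝ} (hx : 0 ≤ x) : x ^ (3 / 2 : ℝ) = x * √x := by
  rw [show (3 / 2 : ℝ) = 1 + 1 / 2 by norm_num, Real.rpow_add' hx (by norm_num), Real.rpow_one,
    Real.sqrt_eq_rpow]

theorem proximity_theorem_general (m n : ℕ) (A : Matrix (Fin m) (Fin n) ℤ)
    (b : Fin m → ℤ) (σ : ℕ)
    (AR : Matrix (Fin m) (Fin n) ℝ) (hAR : AR = fun i j => (A i j : ℝ))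
    (xhat : Fin n → ℝ)
    (hhatfeas : (∀ i, 0 ≤ xhat i ∧ xhat i ≤ 1) ∧ l1 xhat ≤ σ)
    (hhatfrac : (Finset.univ.filter (fun i => ¬ ∃ z : ℤ, xhat i = z)).card ≤ m)
    (hhatopt : ∀ x : Fin n → ℝ, (∀ i, 0 ≤ x i ∧ x i ≤ 1) → l1 x ≤ σ →
      l2 (AR.mulVec xhat - fun r => (b r : ℝ)) ≤ l2 (AR.mulVec x - fun r => (b r : ℝ)))
    (xstar : Fin n → ℝ)
    (hstarfeas : (∀ i, 0 ≤ xstar i ∧ xstar i ≤ 1) ∧ l0 xstar ≤ σ)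
    (hstaropt : ∀ x : Fin n → ℝ, (∀ i, 0 ≤ x i ∧ x i ≤ 1) → l0 x ≤ σ →
      l2 (AR.mulVec xstar - fun r => (b r : ℝ)) ≤ l2 (AR.mulVec x - fun r => (b r : ℝ))) :
    l2 (AR.mulVec xstar - AR.mulVec xhat)
      ≤ 2 * l1 (fun i => xhat i - ⌊xhat i⌋) * (⨆ j, l2 (fun r => AR r j)) ∧
    2 * l1 (fun i => xhat i - ⌊xhat i⌋) * (⨆ j, l2 (fun r => AR r j))
      ≤ 2 * (m : ℝ) ^ ((3 : ℝ) / 2) * matInf A := by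
  simp only [Int.self_sub_floor]
  have hC : ⨆ j, l2 (fun r => AR r j) ≤ √m * matInf A := by
    rw [hAR]
    exact iSup_l2_col_le_sqrt_mul_matInf A
  have hC0 : 0 ≤ ⨆ j, l2 (fun r => AR r j) := Real.iSup_nonneg fun j => Real.sqrt_nonneg _
  set C := ⨆ j, l2 (fun r => AR r j)
  obtain ⟨v, hvT, hvl1, hvcoord, hvsum⟩ := exists_rounding hhatfeas
  have hdir := (eventually_add_smul_mem_boxL1Ball hhatfeas hvcoord hvsum).and
    (eventually_add_smul_mem_boxL1Ball (v := -v) hhatfeas (by simpa using hvcoord)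
      (by simpa using hvsum))
  have hprox := l2_mulVec_sub_le_of_isMinOn AR _
    (isMinOn_iff.2 fun y hy => hhatopt y hy.1 hy.2) (isMinOn_iff.2 fun y hy => hstaropt y hy.1 hy.2)
    ((convex_boxL1Ball _).eventually_add_smul_sub_mem hhatfeas
      (boxL0Ball_subset_boxL1Ball σ hstarfeas)) hvT hdir
  have hfrac : l1 (fun i => Int.fract (xhat i)) ≤ m :=
    (l1_fract_le_card_nonIntegralCoords xhat).trans (by exact_mod_cast hhatfrac)
  constructor
  · calc l2 (AR *ᵥ xstar - AR *ᵥ xhat) ≤ l2 (AR *ᵥ v) := hprox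
      _ ≤ l1 v * C := l2_mulVec_le AR v
      _ ≤ 2 * l1 (fun i => Int.fract (xhat i)) * C := by gcongr
  · calc 2 * l1 (fun i => Int.fract (xhat i)) * C ≤ 2 * m * (√m * matInf A) := by gcongr
      _ = 2 * (m : ℝ) ^ ((3 : ℝ) / 2) * matInf A := by
        rw [rpow_three_halves (Nat.cast_nonneg m)]
        ring

/-- proximity theorem: for an optimal solution `x̂` of the
ℓ₁-relaxation (with at most `m` fractional entries) and an optimal solution
`x⋆` of the ℓ₀-problem,
`‖Ax⋆ − Ax̂‖₂ ≤ 2‖x̂ − ⌊x̂⌋‖₁ · maxᵢ‖Aᵢ‖₂ ≤ 2 m^{3/2} ‖A‖_∞`. -/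
theorem proximity_theorem (m n : ℕ) (A : Matrix (Fin m) (Fin n) ℤ)
    (b : Fin m → ℤ) (σ : ℕ) (hσ : 1 ≤ σ)
    (AR : Matrix (Fin m) (Fin n) ℝ) (hAR : AR = fun i j => (A i j : ℝ))
    (xhat : Fin n → ℝ)
    (hhatfeas : (∀ i, 0 ≤ xhat i ∧ xhat i ≤ 1) ∧ l1 xhat ≤ σ)
    (hhatfrac : (Finset.univ.filter (fun i => ¬ ∃ z : ℤ, xhat i = z)).card ≤ m)
    (hhatopt : ∀ x : Fin n → ℝ, (∀ i, 0 ≤ x i ∧ x i ≤ 1) → l1 x ≤ σ →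
      l2 (AR.mulVec xhat - fun r => (b r : ℝ)) ≤ l2 (AR.mulVec x - fun r => (b r : ℝ)))
    (xstar : Fin n → ℝ)
    (hstarfeas : (∀ i, 0 ≤ xstar i ∧ xstar i ≤ 1) ∧ l0 xstar ≤ σ)
    (hstaropt : ∀ x : Fin n → ℝ, (∀ i, 0 ≤ x i ∧ x i ≤ 1) → l0 x ≤ σ →
      l2 (AR.mulVec xstar - fun r => (b r : ℝ)) ≤ l2 (AR.mulVec x - fun r => (b r : ℝ))) :
    l2 (AR.mulVec xstar - AR.mulVec xhat)
      ≤ 2 * l1 (fun i => xhat i - ⌊xhat i⌋) * (⨆ j, l2 (fun r => AR r j)) ∧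
    2 * l1 (fun i => xhat i - ⌊xhat i⌋) * (⨆ j, l2 (fun r => AR r j))
      ≤ 2 * (m : ℝ) ^ ((3 : ℝ) / 2) * matInf A :=
  proximity_theorem_general m n A b σ AR hAR xhat hhatfeas hhatfrac hhatopt xstar hstarfeas hstaropt
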